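/- Let n ∈ ℕ and let C ⊆ ℝⁿ be a set with ‖u − v‖₂ ≤ K for all u, v ∈ C (diameter bound K ≥ 0). Let F : ℝⁿ → ℝ be differentiable with gradient ∇F that is L-Lipschitz on C. Let (Ω, 𝓕, P) be a probability space and 𝒢 ⊆ 𝓕 a sub-σ-algebra. Let x_prev, x, d_prev : Ω → ℝⁿ be 𝒢-measurable with x_prev(ω), x(ω) ∈ C, and suppose ‖x − x_prev‖₂ ≤ γ·K almost surely for some γ ≥ 0. Let g : Ω → ℝⁿ be an integrable random vector with E[g | 𝒢] = ∇F(x) almost surely and E[‖g − ∇F(x)‖₂² | 𝒢] ≤ σ² almost surely. Let ρ ∈ (0, 1] and define d = (1 − ρ)·d_prev + ρ·g. Then almost surely E[‖∇F(x) − d‖₂² | 𝒢] ≤ (1 − ρ/2)·‖∇F(x_prev) − d_prev‖₂² + ρ²·σ² + (2·L²·K²·γ²)/ρ. -/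

import Mathlib

/-!
Write `∇F(x) - d = (1 - ρ) (∇F(x) - d_prev) + ρ (∇F(x) - g)`. The first summand is
`𝒢`-measurable and the second is conditionally centred, so the cross term vanishes under
`E[· | 𝒢]` and the conditional second moment splits as
`(1 - ρ)² ‖∇F(x) - d_prev‖² + ρ² E[‖g - ∇F(x)‖² | 𝒢]`; conditional Jensen provides the square
integrability this needs. Splitting
`∇F(x) - d_prev = (∇F(x_prev) - d_prev) + (∇F(x) - ∇F(x_prev))` and applying Young's inequality
with weight `ρ` bounds the first term, the drift `‖∇F(x) - ∇F(x_prev)‖` being at most `LγK`.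
-/

open MeasureTheory

section CondExpNormSq

variable {Ω E : Type*} [NormedAddCommGroup E] [InnerProductSpace ℝ E] [CompleteSpace E]
  {m m0 : MeasurableSpace Ω} {μ : Measure Ω} {a b : Ω → E}

theorem condExp_norm_add_sq_of_condExp_eq_zero (hm : m ≤ m0) [SigmaFinite (μ.trim hm)]
    (ha : StronglyMeasurable[m] a) (ha2 : Integrable (fun ω => ‖a ω‖ ^ 2) μ)
    (hb : Integrable b μ) (hb2 : Integrable (fun ω => ‖b ω‖ ^ 2) μ)
    (hb0 : μ[b|m] =ᵐ[μ] 0) :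
    μ[fun ω => ‖a ω + b ω‖ ^ 2|m] =ᵐ[μ]
      fun ω => ‖a ω‖ ^ 2 + μ[fun ω => ‖b ω‖ ^ 2|m] ω := by
  have hinner_int : Integrable (fun ω => inner ℝ (a ω) (b ω)) μ := by
    refine (ha2.add hb2).mono' ((ha.mono hm).aestronglyMeasurable.inner hb.1)
      (ae_of_all _ fun ω => ?_)
    have := abs_real_inner_le_norm (a ω) (b ω)
    simp only [Real.norm_eq_abs, Pi.add_apply]
    nlinarith [sq_nonneg (‖a ω‖ - ‖b ω‖)]
  have hinner : μ[fun ω => inner ℝ (a ω) (b ω)|m] =ᵐ[μ] 0 := by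
    filter_upwards [condExp_bilin_of_stronglyMeasurable_left
      (innerSL ℝ : E →L[ℝ] E →L[ℝ] ℝ) ha hinner_int hb, hb0] with ω hpull hω
    exact hpull.trans (by simp [hω])
  have hexpand : (fun ω => ‖a ω + b ω‖ ^ 2) = (fun ω => ‖a ω‖ ^ 2)
      + (2 : ℝ) • (fun ω => inner ℝ (a ω) (b ω)) + fun ω => ‖b ω‖ ^ 2 := by
    ext ω
    simp [norm_add_sq_real]
  have hce_a : μ[fun ω => ‖a ω‖ ^ 2|m] = fun ω => ‖a ω‖ ^ 2 :=
    condExp_of_stronglyMeasurable hm (ha.norm.pow 2) ha2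
  rw [hexpand]
  filter_upwards [condExp_add (ha2.add (hinner_int.smul (2 : ℝ))) hb2 m,
    condExp_add ha2 (hinner_int.smul (2 : ℝ)) m,
    condExp_smul (2 : ℝ) (fun ω => inner ℝ (a ω) (b ω)) m, hinner] with ω h1 h2 h3 h4
  simp [h1, h2, h3, h4, hce_a]

theorem integrable_norm_sq_of_integrable_norm_add_sq [IsFiniteMeasure μ] (hm : m ≤ m0)
    (ha : StronglyMeasurable[m] a) (hb : Integrable b μ) (hb0 : μ[b|m] =ᵐ[μ] 0)
    (hab2 : Integrable (fun ω => ‖a ω + b ω‖ ^ 2) μ) :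
    Integrable (fun ω => ‖a ω‖ ^ 2) μ := by
  have ha_aesm : AEStronglyMeasurable a μ := (ha.mono hm).aestronglyMeasurable
  have hab : Integrable (a + b) μ :=
    ((memLp_two_iff_integrable_sq_norm (ha_aesm.add hb.1)).2 hab2).integrable one_le_two
  have hce : μ[a + b|m] =ᵐ[μ] a := by
    have ha_int : Integrable a μ := by simpa using hab.sub hb
    filter_upwards [condExp_add ha_int hb m, hb0] with ω h1 h2
    simp [h1, h2, condExp_of_stronglyMeasurable hm ha ha_int]
  -- conditional Jensen: `‖a‖² = ‖E[a + b | m]‖² ≤ E[‖a + b‖² | m]`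
  have hJensen := Integrable.norm_condExp_rpow_le (m := m) (f := a + b) one_le_two
    (by simpa only [Real.rpow_two, Pi.add_apply] using hab2)
  refine (integrable_condExp (m := m) (f := fun ω => ‖(a + b) ω‖ ^ 2)).mono'
    (ha_aesm.norm.pow 2) ?_
  filter_upwards [hJensen, hce] with ω hω hceω
  simpa only [Real.rpow_two, hceω, Real.norm_eq_abs, abs_pow, abs_norm] using hω

/-- Only an inequality: when `‖a + b‖²` is not integrable, the left side is the junk value `0`. -/
theorem condExp_norm_add_sq_le [IsFiniteMeasure μ] (hm : m ≤ m0)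
    (ha : StronglyMeasurable[m] a) (hb : Integrable b μ) (hb0 : μ[b|m] =ᵐ[μ] 0) :
    μ[fun ω => ‖a ω + b ω‖ ^ 2|m] ≤ᵐ[μ]
      fun ω => ‖a ω‖ ^ 2 + μ[fun ω => ‖b ω‖ ^ 2|m] ω := by
  by_cases hab2 : Integrable (fun ω => ‖a ω + b ω‖ ^ 2) μ
  · have ha2 := integrable_norm_sq_of_integrable_norm_add_sq hm ha hb hb0 hab2
    have ha_aesm : AEStronglyMeasurable a μ := (ha.mono hm).aestronglyMeasurable
    have hb2 : Integrable (fun ω => ‖b ω‖ ^ 2) μ := by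
      have hsum := (memLp_two_iff_integrable_sq_norm (ha_aesm.add hb.1)).2 hab2
      have hb_memLp := hsum.sub ((memLp_two_iff_integrable_sq_norm ha_aesm).2 ha2)
      simp only [add_sub_cancel_left] at hb_memLp
      exact (memLp_two_iff_integrable_sq_norm hb.1).1 hb_memLp
    exact (condExp_norm_add_sq_of_condExp_eq_zero hm ha ha2 hb hb2 hb0).le
  · rw [condExp_of_not_integrable hab2]
    filter_upwards [condExp_nonneg (m := m) (ae_of_all μ fun ω => sq_nonneg ‖b ω‖)] with ω hω
    simp only [Pi.zero_apply] at hω ⊢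
    positivity

theorem condExp_norm_sub_momentum_sq_le [IsFiniteMeasure μ] (hm : m ≤ m0) {G d₀ g : Ω → E}
    (ρ : ℝ) (hG : StronglyMeasurable[m] G) (hd₀ : StronglyMeasurable[m] d₀)
    (hg : Integrable g μ) (hg_unbiased : μ[g|m] =ᵐ[μ] G) :
    μ[fun ω => ‖G ω - ((1 - ρ) • d₀ ω + ρ • g ω)‖ ^ 2|m] ≤ᵐ[μ]
      fun ω => (1 - ρ) ^ 2 * ‖G ω - d₀ ω‖ ^ 2 + ρ ^ 2 * μ[fun ω => ‖g ω - G ω‖ ^ 2|m] ω := by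
  have hG_int : Integrable G μ := integrable_condExp.congr hg_unbiased
  have hnoise : μ[ρ • (G - g)|m] =ᵐ[μ] 0 := by
    filter_upwards [condExp_smul ρ (G - g) m, condExp_sub hG_int hg m, hg_unbiased]
      with ω h1 h2 h3
    simp [h1, h2, h3, condExp_of_stronglyMeasurable hm hG hG_int]
  have hsplit := condExp_norm_add_sq_le hm ((hG.sub hd₀).const_smul (1 - ρ))
    ((hG_int.sub hg).smul ρ) hnoise
  have herror : (fun ω => ‖G ω - ((1 - ρ) • d₀ ω + ρ • g ω)‖ ^ 2)
      = fun ω => ‖((1 - ρ) • (G - d₀)) ω + (ρ • (G - g)) ω‖ ^ 2 := by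
    funext ω
    simp only [Pi.smul_apply, Pi.sub_apply]
    congr 2
    module
  have hnoise_sq : (fun ω => ‖(ρ • (G - g)) ω‖ ^ 2) = ρ ^ 2 • fun ω => ‖g ω - G ω‖ ^ 2 := by
    funext ω
    simp [norm_smul, mul_pow, norm_sub_rev]
  rw [herror]
  filter_upwards [hsplit, condExp_smul (ρ ^ 2) (fun ω => ‖g ω - G ω‖ ^ 2) m] with ω h1 h2
  rw [hnoise_sq, h2] at h1
  simpa [norm_smul, mul_pow] using h1

end CondExpNormSq

theorem one_sub_sq_mul_norm_add_sq_le {E : Type*} [SeminormedAddCommGroup E] {ρ : ℝ}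
    (hρ : ρ ∈ Set.Ioc 0 1) (u v : E) :
    (1 - ρ) ^ 2 * ‖u + v‖ ^ 2 ≤ (1 - ρ / 2) * ‖u‖ ^ 2 + 2 * ‖v‖ ^ 2 / ρ := by
  obtain ⟨hρ0, hρ1⟩ := hρ
  have hYoung : ρ * (‖u‖ + ‖v‖) ^ 2 ≤ (1 + ρ) * (ρ * ‖u‖ ^ 2 + ‖v‖ ^ 2) := by
    nlinarith [sq_nonneg (ρ * ‖u‖ - ‖v‖)]
  calc (1 - ρ) ^ 2 * ‖u + v‖ ^ 2 ≤ (1 - ρ) ^ 2 * (‖u‖ + ‖v‖) ^ 2 := by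
        gcongr; exact norm_add_le u v
    _ ≤ (1 - ρ) ^ 2 * (1 + ρ) * (ρ * ‖u‖ ^ 2 + ‖v‖ ^ 2) / ρ := by
        rw [le_div_iff₀ hρ0, mul_assoc, mul_assoc, mul_comm _ ρ]
        gcongr
    _ ≤ (1 - ρ) * (ρ * ‖u‖ ^ 2 + ‖v‖ ^ 2) / ρ := by
        gcongr
        nlinarith [mul_nonneg (sub_nonneg.2 hρ1) (sq_nonneg ρ)]
    _ = (1 - ρ) * ‖u‖ ^ 2 + (1 - ρ) * ‖v‖ ^ 2 / ρ := by field_simp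
    _ ≤ (1 - ρ / 2) * ‖u‖ ^ 2 + 2 * ‖v‖ ^ 2 / ρ := by gcongr <;> linarith

theorem measurable_gradient {E : Type*} [NormedAddCommGroup E] [InnerProductSpace ℝ E]
    [CompleteSpace E] [MeasurableSpace E] [BorelSpace E] (F : E → ℝ) :
    Measurable (gradient F) :=
  (InnerProductSpace.toDual ℝ E).symm.continuous.measurable.comp (measurable_fderiv ℝ F)

theorem sfw_gradient_tracking_recursion_general {n : ℕ}
    (C : Set (EuclideanSpace ℝ (Fin n))) (K : ℝ)
    (F : EuclideanSpace ℝ (Fin n) → ℝ)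
    (L : ℝ)
    (hLip : ∀ u ∈ C, ∀ v ∈ C, ‖gradient F u - gradient F v‖ ≤ L * ‖u - v‖)
    {Ω : Type*} {m m0 : MeasurableSpace Ω} (hm : m ≤ m0)
    (ℙ : Measure Ω) [IsProbabilityMeasure ℙ]
    (x_prev x d_prev : Ω → EuclideanSpace ℝ (Fin n))
    (hx_meas : Measurable[m] x)
    (hdprev_meas : Measurable[m] d_prev)
    (hxprevC : ∀ ω, x_prev ω ∈ C) (hxC : ∀ ω, x ω ∈ C)
    (γ : ℝ)
    (hstep : ∀ᵐ ω ∂ℙ, ‖x ω - x_prev ω‖ ≤ γ * K)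
    (g : Ω → EuclideanSpace ℝ (Fin n)) (hg_int : Integrable g ℙ)
    (hg_unbiased : ℙ[g|m] =ᵐ[ℙ] fun ω => gradient F (x ω))
    (σ : ℝ)
    (hg_var : ∀ᵐ ω ∂ℙ,
      (ℙ[fun ω' => ‖g ω' - gradient F (x ω')‖ ^ 2|m]) ω ≤ σ ^ 2)
    (ρ : ℝ) (hρ : ρ ∈ Set.Ioc (0 : ℝ) 1)
    (d : Ω → EuclideanSpace ℝ (Fin n))
    (hd : ∀ ω, d ω = (1 - ρ) • d_prev ω + ρ • g ω) :
    ∀ᵐ ω ∂ℙ,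
      (ℙ[fun ω' => ‖gradient F (x ω') - d ω'‖ ^ 2|m]) ω ≤
        (1 - ρ / 2) * ‖gradient F (x_prev ω) - d_prev ω‖ ^ 2
          + ρ ^ 2 * σ ^ 2 + 2 * L ^ 2 * K ^ 2 * γ ^ 2 / ρ := by
  have hG_meas : Measurable[m] fun ω => gradient F (x ω) := (measurable_gradient F).comp hx_meas
  filter_upwards [condExp_norm_sub_momentum_sq_le hm ρ hG_meas.stronglyMeasurable
    hdprev_meas.stronglyMeasurable hg_int hg_unbiased, hg_var, hstep] with ω hmomentum hvar hstepω
  have hdrift : ‖gradient F (x ω) - gradient F (x_prev ω)‖ ≤ |L| * (γ * K) :=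
    (hLip _ (hxC ω) _ (hxprevC ω)).trans <|
      (mul_le_mul_of_nonneg_right (le_abs_self L) (norm_nonneg _)).trans (by gcongr)
  calc (ℙ[fun ω' => ‖gradient F (x ω') - d ω'‖ ^ 2|m]) ω
      ≤ (1 - ρ) ^ 2 * ‖(gradient F (x_prev ω) - d_prev ω)
            + (gradient F (x ω) - gradient F (x_prev ω))‖ ^ 2
          + ρ ^ 2 * (ℙ[fun ω' => ‖g ω' - gradient F (x ω')‖ ^ 2|m]) ω := by
        simpa only [hd, add_comm (gradient F (x_prev ω) - d_prev ω), sub_add_sub_cancel]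
          using hmomentum
    _ ≤ (1 - ρ / 2) * ‖gradient F (x_prev ω) - d_prev ω‖ ^ 2
          + 2 * ‖gradient F (x ω) - gradient F (x_prev ω)‖ ^ 2 / ρ + ρ ^ 2 * σ ^ 2 := by
        gcongr
        exact one_sub_sq_mul_norm_add_sq_le hρ _ _
    _ ≤ (1 - ρ / 2) * ‖gradient F (x_prev ω) - d_prev ω‖ ^ 2
          + 2 * (|L| * (γ * K)) ^ 2 / ρ + ρ ^ 2 * σ ^ 2 := by
        gcongr
        exact hρ.1.le
    _ = _ := by rw [mul_pow, sq_abs]; ring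

/-- One-step gradient-tracking error recursion for the stochastic Frank–Wolfe algorithm:
if `C` has diameter at most `K`, `∇F` is `L`-Lipschitz on `C`, consecutive iterates
`x_prev, x ∈ C` satisfy `‖x − x_prev‖ ≤ γK` a.s., `g` is an unbiased stochastic gradient
at `x` with conditional variance at most `σ²`, and `d = (1−ρ) d_prev + ρ g`, then a.s.
`E[‖∇F(x) − d‖² | 𝒢] ≤ (1 − ρ/2)‖∇F(x_prev) − d_prev‖² + ρ²σ² + 2L²K²γ²/ρ`. -/
theorem sfw_gradient_tracking_recursion {n : ℕ}
    (C : Set (EuclideanSpace ℝ (Fin n))) (K : ℝ) (hK : 0 ≤ K)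
    (hCdiam : ∀ u ∈ C, ∀ v ∈ C, ‖u - v‖ ≤ K)
    (F : EuclideanSpace ℝ (Fin n) → ℝ) (hF : Differentiable ℝ F)
    (L : ℝ)
    (hLip : ∀ u ∈ C, ∀ v ∈ C, ‖gradient F u - gradient F v‖ ≤ L * ‖u - v‖)
    {Ω : Type*} {m m0 : MeasurableSpace Ω} (hm : m ≤ m0)
    (ℙ : Measure Ω) [IsProbabilityMeasure ℙ]
    (x_prev x d_prev : Ω → EuclideanSpace ℝ (Fin n))
    (hxprev_meas : Measurable[m] x_prev) (hx_meas : Measurable[m] x)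
    (hdprev_meas : Measurable[m] d_prev)
    (hxprevC : ∀ ω, x_prev ω ∈ C) (hxC : ∀ ω, x ω ∈ C)
    (γ : ℝ) (hγ : 0 ≤ γ)
    (hstep : ∀ᵐ ω ∂ℙ, ‖x ω - x_prev ω‖ ≤ γ * K)
    (g : Ω → EuclideanSpace ℝ (Fin n)) (hg_int : Integrable g ℙ)
    (hg_unbiased : ℙ[g|m] =ᵐ[ℙ] fun ω => gradient F (x ω))
    (σ : ℝ)
    (hg_var : ∀ᵐ ω ∂ℙ,
      (ℙ[fun ω' => ‖g ω' - gradient F (x ω')‖ ^ 2|m]) ω ≤ σ ^ 2)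
    (ρ : ℝ) (hρ : ρ ∈ Set.Ioc (0 : ℝ) 1)
    (d : Ω → EuclideanSpace ℝ (Fin n))
    (hd : ∀ ω, d ω = (1 - ρ) • d_prev ω + ρ • g ω) :
    ∀ᵐ ω ∂ℙ,
      (ℙ[fun ω' => ‖gradient F (x ω') - d ω'‖ ^ 2|m]) ω ≤
        (1 - ρ / 2) * ‖gradient F (x_prev ω) - d_prev ω‖ ^ 2
          + ρ ^ 2 * σ ^ 2 + 2 * L ^ 2 * K ^ 2 * γ ^ 2 / ρ :=
  sfw_gradient_tracking_recursion_general C K F L hLip hm ℙ x_prev x d_prev hx_meas hdprev_meas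
    hxprevC hxC γ hstep g hg_int hg_unbiased σ hg_var ρ hρ d hd
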